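/- arXiv:1502.03470 — 4 statements merged into one kernel-verified Lean document; each statement's English description precedes it below -/
import Mathlib

section
/- Let Ŝ be the Doob h-transform of two-dimensional simple random walk by the potential kernel a, i.e., the Markov chain on ℤ² \ {0} with transition probability a(y)/(4a(x)) from x to its neighbour y. Let 𝒩 = {(1,0),(−1,0),(0,1),(0,−1)} be the set of the four neighbours of the origin, and let τ̂₀(𝒩) be the entrance time of Ŝ into 𝒩. Then the stopped process (1/a(Ŝ_{k ∧ τ̂₀(𝒩)}))_{k ≥ 0} is a martingale under P̂_x for every x ≠ 0. -/
open MeasureTheory Filter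

/-- Nearest-neighbour relation on `ℤ²`. -/
def adjacent (x y : ℤ × ℤ) : Prop := (x.1 - y.1) ^ 2 + (x.2 - y.2) ^ 2 = 1

instance : ∀ x y : ℤ × ℤ, Decidable (adjacent x y) := fun x y => by
  unfold adjacent; infer_instance

/-- Transition kernel of the conditioned walk `Ŝ` (Doob `h`-transform of SRW by `a`). -/
noncomputable def phat (a : ℤ × ℤ → ℝ) (x y : ℤ × ℤ) : ℝ :=
  if adjacent x y ∧ x ≠ 0 then a y / (4 * a x) else 0

/-- The four neighbours of the origin. -/
def nbrs0 : Finset (ℤ × ℤ) := {(1, 0), (-1, 0), (0, 1), (0, -1)}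

open Classical in
/-- The stopped process `1 / a (Ŝ_{k ∧ τ̂₀(𝒩)})` on the path space of `Ŝ`. -/
noncomputable def stoppedInvA (a : ℤ × ℤ → ℝ) (k : ℕ) (ω : ℕ → ℤ × ℤ) : ℝ :=
  if h : ∃ j, ω j ∈ nbrs0 then (a (ω (min k (Nat.find h))))⁻¹
  else (a (ω k))⁻¹

/-- The natural filtration of the coordinate process. -/
noncomputable def coordFiltration :
    Filtration ℕ (inferInstance : MeasurableSpace (ℕ → ℤ × ℤ)) :=
  Filtration.natural (fun i (ω : ℕ → ℤ × ℤ) => ω i)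
    (fun i => (measurable_pi_apply i).stronglyMeasurable)

/-!
Under `P̂_x` the coordinate process is the Markov chain with kernel `phat a`, so a process
whose value at time `n` depends only on the first `n` steps is a martingale as soon as averaging
its value at time `n + 1` against the kernel gives back its value at time `n`; this is checked on
each cylinder of paths. For `1 / a(Ŝ_{k ∧ τ̂₀(𝒩)})`, after the stopping time the process is
constant and `phat a z` has total mass `1` because `a` is harmonic at `z ≠ 0`. Before it, the
current point `z` is not in `𝒩`, so no neighbour `y` of `z` is the origin and
`∑_{y ∼ z} a(y) / (4 a(z)) · 1 / a(y) = 1 / a(z)`. Integrability holds because in `n` steps the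
walk only reaches finitely many points.
-/

open Preorder Set Function MeasureTheory.Filtration

section PathSpace

variable {X : ℕ → Type*}

def prefixCylinder (n : ℕ) (σ : Π i, X i) : Set (Π i, X i) := {ω | ∀ i ≤ n, ω i = σ i}

lemma preimage_restrictLe_singleton (n : ℕ) (σ : Π i, X i) :
    restrictLe n ⁻¹' {restrictLe n σ} = prefixCylinder n σ := by
  ext ω
  simp [prefixCylinder, funext_iff, restrictLe]

lemma prefixCylinder_eq_iUnion (n : ℕ) (σ : Π i, X i) :
    prefixCylinder n σ = ⋃ y, prefixCylinder (n + 1) (update σ (n + 1) y) := by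
  ext ω
  simp only [prefixCylinder, mem_ofPred_eq, mem_iUnion]
  constructor
  · intro h
    refine ⟨ω (n + 1), fun i hi => ?_⟩
    rcases eq_or_ne i (n + 1) with rfl | hne
    · rw [update_self]
    · rw [update_of_ne hne]
      exact h i (by omega)
  · rintro ⟨y, hy⟩ i hi
    simpa [update_of_ne (show i ≠ n + 1 by omega)] using hy i (by omega)

lemma pairwise_disjoint_prefixCylinder_update (n : ℕ) (σ : Π i, X i) :
    Pairwise (Disjoint on fun y => prefixCylinder (n + 1) (update σ (n + 1) y)) := by
  intro y y' hne
  refine Set.disjoint_left.mpr fun ω h h' => hne ?_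
  simpa using (h (n + 1) le_rfl).symm.trans (h' (n + 1) le_rfl)

variable [∀ n, MeasurableSpace (X n)]

lemma measurableSet_prefixCylinder [∀ n, MeasurableSingletonClass (X n)] (n : ℕ)
    (σ : Π i, X i) : MeasurableSet (prefixCylinder n σ) := by
  rw [← preimage_restrictLe_singleton]
  exact measurable_restrictLe n (measurableSet_singleton _)

lemma DependsOn.measurable_piLE [∀ n, MeasurableSingletonClass (X n)] [∀ n, Countable (X n)]
    {β : Type*} [MeasurableSpace β] [Nonempty β] {f : (Π i, X i) → β} {n : ℕ}
    (hf : DependsOn f (Iic n)) : Measurable[piLE n] f := by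
  obtain ⟨g, rfl⟩ := dependsOn_iff_exists_comp.mp hf
  exact (measurable_of_countable g).comp (comap_measurable _)

lemma measure_eq_zero_of_forall_prefixCylinder [∀ n, Countable (X n)] {μ : Measure (Π i, X i)}
    {n : ℕ} {s : Set (Π i, X i)} (hs : ∀ ω ∈ s, μ (prefixCylinder n ω) = 0) : μ s = 0 := by
  refine measure_mono_null (subset_preimage_image (restrictLe n) s) ?_
  rw [← biUnion_preimage_singleton, measure_biUnion_null_iff (to_countable _)]
  rintro _ ⟨ω, hω, rfl⟩
  rw [preimage_restrictLe_singleton]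
  exact hs ω hω

lemma martingale_piLE_of_setIntegral_prefixCylinder_eq [∀ n, MeasurableSingletonClass (X n)]
    [∀ n, Countable (X n)] {μ : Measure (Π i, X i)} [IsFiniteMeasure μ]
    {f : ℕ → (Π i, X i) → ℝ} (hdep : ∀ n, DependsOn (f n) (Iic n))
    (hint : ∀ n, Integrable (f n) μ)
    (hf : ∀ n σ, ∫ ω in prefixCylinder n σ, f n ω ∂μ = ∫ ω in prefixCylinder n σ, f (n + 1) ω ∂μ) :
    Martingale f piLE μ := by
  refine martingale_of_setIntegral_eq_succ (fun n => (hdep n).measurable_piLE.stronglyMeasurable)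
    hint fun n s hs => ?_
  -- a `piLE n`-measurable set is a countable disjoint union of fibres of `restrictLe n`,
  -- and each nonempty fibre is a prefix cylinder
  obtain ⟨t, -, rfl⟩ := hs
  have hU : restrictLe n ⁻¹' t = ⋃ ρ : t, restrictLe n ⁻¹' {ρ.1} := by
    rw [← biUnion_preimage_singleton, biUnion_eq_iUnion]
  have hd : Pairwise (Disjoint on fun ρ : t => restrictLe n ⁻¹' {ρ.1}) :=
    fun ρ ρ' h => (disjoint_singleton.mpr (Subtype.coe_injective.ne h)).preimage _
  have hm : ∀ ρ : t, MeasurableSet (restrictLe n ⁻¹' {ρ.1}) :=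
    fun ρ => measurable_restrictLe n (measurableSet_singleton _)
  rw [hU, integral_iUnion hm hd (hint n).integrableOn, integral_iUnion hm hd (hint _).integrableOn]
  refine tsum_congr fun ρ => ?_
  rcases eq_empty_or_nonempty (restrictLe n ⁻¹' {ρ.1}) with h | ⟨σ, hσ⟩
  · simp [h]
  · rw [show ρ.1 = restrictLe n σ from hσ.symm, preimage_restrictLe_singleton]
    exact hf n σ

end PathSpace

section MarkovChain

variable {α : Type*}

def reachableAt (p : α → α → ℝ) (x : α) : ℕ → Set α
  | 0 => {x}
  | i + 1 => ⋃ z ∈ reachableAt p x i, {y | p z y ≠ 0}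

lemma finite_reachableAt {p : α → α → ℝ} (hp : ∀ z, {y | p z y ≠ 0}.Finite) (x : α) (i : ℕ) :
    (reachableAt p x i).Finite := by
  induction i with
  | zero => exact finite_singleton x
  | succ i ih => exact ih.biUnion fun z _ => hp z

lemma mem_reachableAt {p : α → α → ℝ} {x : α} {ω : ℕ → α}
    (hω : ω 0 = x ∧ ∀ i, p (ω i) (ω (i + 1)) ≠ 0) (i : ℕ) : ω i ∈ reachableAt p x i := by
  induction i with
  | zero => exact hω.1
  | succ i ih => exact mem_biUnion ih (hω.2 i)

variable [DecidableEq α]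

def pathWeight (p : α → α → ℝ) (x : α) (n : ℕ) (σ : ℕ → α) : ℝ :=
  (if σ 0 = x then 1 else 0) * ∏ i ∈ Finset.range n, p (σ i) (σ (i + 1))

lemma pathWeight_nonneg {p : α → α → ℝ} (hp : ∀ z y, 0 ≤ p z y) (x : α) (n : ℕ)
    (σ : ℕ → α) : 0 ≤ pathWeight p x n σ :=
  mul_nonneg (by split_ifs <;> norm_num) (Finset.prod_nonneg fun i _ => hp _ _)

lemma pathWeight_ne_zero_iff {p : α → α → ℝ} {x : α} {n : ℕ} {σ : ℕ → α} :
    pathWeight p x n σ ≠ 0 ↔ σ 0 = x ∧ ∀ i < n, p (σ i) (σ (i + 1)) ≠ 0 := by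
  simp [pathWeight, Finset.prod_ne_zero_iff]

lemma pathWeight_update_succ (p : α → α → ℝ) (x : α) (n : ℕ) (σ : ℕ → α) (y : α) :
    pathWeight p x (n + 1) (update σ (n + 1) y) = pathWeight p x n σ * p (σ n) y := by
  have hσ : ∀ i ≤ n, update σ (n + 1) y i = σ i := fun i hi => update_of_ne (by omega) _ _
  rw [pathWeight, pathWeight, Finset.prod_range_succ, update_self, hσ 0 (Nat.zero_le n),
    hσ n le_rfl, Finset.prod_congr rfl fun i hi => by
      rw [hσ i (by simp at hi; omega), hσ (i + 1) (by simp at hi; omega)], mul_assoc]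

variable [MeasurableSpace α]

def IsMarkovChainLaw (P : Measure (ℕ → α)) (p : α → α → ℝ) (x : α) : Prop :=
  ∀ n σ, P (prefixCylinder n σ) = ENNReal.ofReal (pathWeight p x n σ)

namespace IsMarkovChainLaw

variable {P : Measure (ℕ → α)} {p : α → α → ℝ} {x : α}

lemma ae_admissible [Countable α] (hP : IsMarkovChainLaw P p x) :
    ∀ᵐ ω ∂P, ω 0 = x ∧ ∀ i, p (ω i) (ω (i + 1)) ≠ 0 := by
  have hnull : ∀ n ω, pathWeight p x n ω = 0 → P (prefixCylinder n ω) = 0 := fun n ω h => by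
    rw [hP, h, ENNReal.ofReal_zero]
  refine eventually_and.mpr ⟨?_, ae_all_iff.mpr fun i => ?_⟩
  · refine measure_eq_zero_of_forall_prefixCylinder (n := 0) fun ω hω => hnull 0 ω ?_
    exact by_contra fun h => hω (pathWeight_ne_zero_iff.mp h).1
  · refine measure_eq_zero_of_forall_prefixCylinder (n := i + 1) fun ω hω => hnull _ ω ?_
    exact by_contra fun h => (pathWeight_ne_zero_iff.mp h).2 i (by omega) (not_not.mp hω)

variable [MeasurableSingletonClass α]

lemma setIntegral_prefixCylinder (hP : IsMarkovChainLaw P p x) (hp : ∀ z y, 0 ≤ p z y)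
    {n : ℕ} {g : (ℕ → α) → ℝ} (hg : DependsOn g (Iic n)) (σ : ℕ → α) :
    ∫ ω in prefixCylinder n σ, g ω ∂P = pathWeight p x n σ * g σ := by
  rw [setIntegral_congr_fun (measurableSet_prefixCylinder n σ) fun ω hω => hg fun i hi => hω i hi,
    setIntegral_const, measureReal_def, hP, ENNReal.toReal_ofReal (pathWeight_nonneg hp x n σ),
    smul_eq_mul]

variable [Countable α]

lemma setIntegral_prefixCylinder_of_dependsOn_succ (hP : IsMarkovChainLaw P p x)
    (hp : ∀ z y, 0 ≤ p z y) {n : ℕ} {g : (ℕ → α) → ℝ} (hg : DependsOn g (Iic (n + 1)))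
    (hgi : Integrable g P) (σ : ℕ → α) :
    ∫ ω in prefixCylinder n σ, g ω ∂P
      = pathWeight p x n σ * ∑' y, p (σ n) y * g (update σ (n + 1) y) := by
  rw [prefixCylinder_eq_iUnion, integral_iUnion (fun y => measurableSet_prefixCylinder _ _)
    (pairwise_disjoint_prefixCylinder_update n σ) hgi.integrableOn, ← tsum_mul_left]
  refine tsum_congr fun y => ?_
  rw [hP.setIntegral_prefixCylinder hp hg, pathWeight_update_succ, mul_assoc]

lemma integrable_of_dependsOn [IsFiniteMeasure P] (hP : IsMarkovChainLaw P p x)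
    (hfin : ∀ z, {y | p z y ≠ 0}.Finite) {n : ℕ} {g : (ℕ → α) → ℝ}
    (hg : DependsOn g (Iic n)) : Integrable g P := by
  obtain ⟨G, rfl⟩ := dependsOn_iff_exists_comp.mp hg
  have hR : (Set.pi univ fun i : Iic n => reachableAt p x i).Finite :=
    Finite.pi fun i => finite_reachableAt hfin x i
  obtain ⟨C, hC⟩ := (hR.image fun ρ => ‖G ρ‖).bddAbove
  refine Integrable.of_bound
    (hg.measurable_piLE.mono (piLE.le n) le_rfl).aestronglyMeasurable C ?_
  filter_upwards [hP.ae_admissible] with ω hω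
  exact hC ⟨_, fun i _ => mem_reachableAt hω i, rfl⟩

theorem martingale [IsFiniteMeasure P] (hP : IsMarkovChainLaw P p x) (hp : ∀ z y, 0 ≤ p z y)
    {f : ℕ → (ℕ → α) → ℝ} (hdep : ∀ n, DependsOn (f n) (Iic n))
    (hint : ∀ n, Integrable (f n) P)
    (hf : ∀ n σ, pathWeight p x n σ ≠ 0 →
      ∑' y, p (σ n) y * f (n + 1) (update σ (n + 1) y) = f n σ) :
    Martingale f piLE P := by
  refine martingale_piLE_of_setIntegral_prefixCylinder_eq hdep hint fun n σ => ?_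
  rw [hP.setIntegral_prefixCylinder hp (hdep n),
    hP.setIntegral_prefixCylinder_of_dependsOn_succ hp (hdep (n + 1)) (hint _)]
  by_cases hw : pathWeight p x n σ = 0
  · simp [hw]
  · rw [hf n σ hw]

end IsMarkovChainLaw

end MarkovChain

section ConditionedWalk

lemma sq_add_sq_eq_one_iff_mem_nbrs0 (u : ℤ × ℤ) : u.1 ^ 2 + u.2 ^ 2 = 1 ↔ u ∈ nbrs0 := by
  obtain ⟨u, v⟩ := u
  constructor
  · intro h
    have hu : -1 ≤ u ∧ u ≤ 1 := by constructor <;> nlinarith [sq_nonneg v]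
    have hv : -1 ≤ v ∧ v ≤ 1 := by constructor <;> nlinarith [sq_nonneg u]
    obtain ⟨hu1, hu2⟩ := hu
    obtain ⟨hv1, hv2⟩ := hv
    interval_cases u <;> interval_cases v <;> simp_all [nbrs0]
  · simp only [nbrs0, Finset.mem_insert, Finset.mem_singleton]
    rintro (h | h | h | h) <;> simp [Prod.ext_iff] at h <;> simp [h.1, h.2]

lemma adjacent_iff_sub_mem_nbrs0 {z y : ℤ × ℤ} : adjacent z y ↔ y - z ∈ nbrs0 := by
  rw [← sq_add_sq_eq_one_iff_mem_nbrs0, adjacent, Prod.fst_sub, Prod.snd_sub, ← neg_sub y.1,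
    ← neg_sub y.2, neg_sq, neg_sq]

lemma neg_mem_nbrs0 {e : ℤ × ℤ} (he : e ∈ nbrs0) : -e ∈ nbrs0 := by
  simp only [nbrs0, Finset.mem_insert, Finset.mem_singleton] at he
  rcases he with rfl | rfl | rfl | rfl <;> decide

lemma add_ne_zero_of_not_mem_nbrs0 {z e : ℤ × ℤ} (hz : z ∉ nbrs0) (he : e ∈ nbrs0) :
    z + e ≠ 0 := fun h => hz (eq_neg_of_add_eq_zero_left h ▸ neg_mem_nbrs0 he)

lemma sum_nbrs0 {M : Type*} [AddCommMonoid M] (f : ℤ × ℤ → M) :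
    ∑ e ∈ nbrs0, f e = f (1, 0) + f (-1, 0) + f (0, 1) + f (0, -1) := by
  simp [nbrs0, add_assoc]

variable {a : ℤ × ℤ → ℝ}

lemma phat_nonneg (ha : ∀ y, 0 ≤ a y) (z y : ℤ × ℤ) : 0 ≤ phat a z y := by
  unfold phat
  split_ifs
  · exact div_nonneg (ha y) (mul_nonneg zero_le_four (ha z))
  · exact le_rfl

lemma ne_zero_of_phat_ne_zero (ha0 : a 0 = 0) {z y : ℤ × ℤ} (h : phat a z y ≠ 0) : y ≠ 0 := by
  rintro rfl
  simp [phat, ha0] at h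

lemma finite_support_phat (a : ℤ × ℤ → ℝ) (z : ℤ × ℤ) : {y | phat a z y ≠ 0}.Finite := by
  refine (nbrs0.finite_toSet.image (z + ·)).subset fun y hy => ⟨y - z, ?_, add_sub_cancel z y⟩
  by_contra h
  exact hy (if_neg fun hzy => h (adjacent_iff_sub_mem_nbrs0.mp hzy.1))

lemma tsum_phat_mul {z : ℤ × ℤ} (hz : z ≠ 0) (h : ℤ × ℤ → ℝ) :
    ∑' y, phat a z y * h y = (∑ e ∈ nbrs0, a (z + e) * h (z + e)) / (4 * a z) := by
  rw [← (Equiv.addLeft z).tsum_eq, tsum_eq_sum (s := nbrs0) fun e he => ?_, Finset.sum_div]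
  · refine Finset.sum_congr rfl fun e he => ?_
    rw [Equiv.coe_addLeft, phat,
      if_pos ⟨adjacent_iff_sub_mem_nbrs0.mpr (by simpa using he), hz⟩]
    ring
  · rw [Equiv.coe_addLeft, phat,
      if_neg fun h => he (by simpa using adjacent_iff_sub_mem_nbrs0.mp h.1), zero_mul]

lemma sum_nbrs0_add_eq (hharm : ∀ x : ℤ × ℤ, x ≠ 0 →
      (1 / 4) * (a (x + (1, 0)) + a (x - (1, 0)) + a (x + (0, 1)) + a (x - (0, 1))) = a x)
    {z : ℤ × ℤ} (hz : z ≠ 0) : ∑ e ∈ nbrs0, a (z + e) = 4 * a z := by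
  have h := hharm z hz
  simp only [sub_eq_add_neg, Prod.neg_mk, neg_zero] at h
  rw [sum_nbrs0]
  linarith

end ConditionedWalk

lemma exists_first_of_exists_le {p : ℕ → Prop} {n : ℕ} (h : ∃ j ≤ n, p j) :
    ∃ N ≤ n, p N ∧ ∀ j < N, ¬ p j := by
  classical
  obtain ⟨j, hj, hpj⟩ := h
  exact ⟨Nat.find ⟨j, hpj⟩, (Nat.find_min' _ hpj).trans hj, Nat.find_spec _,
    fun _ => Nat.find_min _⟩

section StoppedProcess

variable (a : ℤ × ℤ → ℝ)

lemma stoppedInvA_of_forall_lt_not_mem {k : ℕ} {ω : ℕ → ℤ × ℤ} (h : ∀ j < k, ω j ∉ nbrs0) :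
    stoppedInvA a k ω = (a (ω k))⁻¹ := by
  unfold stoppedInvA
  split_ifs with hex
  · rw [min_eq_left ((Nat.le_find_iff hex k).mpr h)]
  · rfl

lemma stoppedInvA_of_first_mem {k N : ℕ} {ω : ℕ → ℤ × ℤ} (hN : N ≤ k) (hmem : ω N ∈ nbrs0)
    (hfirst : ∀ j < N, ω j ∉ nbrs0) : stoppedInvA a k ω = (a (ω N))⁻¹ := by
  have hex : ∃ j, ω j ∈ nbrs0 := ⟨N, hmem⟩
  rw [stoppedInvA, dif_pos hex, (Nat.find_eq_iff hex).mpr ⟨hmem, hfirst⟩, min_eq_right hN]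

lemma stoppedInvA_dependsOn (n : ℕ) : DependsOn (stoppedInvA a n) (Iic n) := by
  intro ω ω' h
  replace h : ∀ i ≤ n, ω i = ω' i := h
  by_cases hhit : ∃ j ≤ n, ω j ∈ nbrs0
  · obtain ⟨N, hN, hmem, hfirst⟩ := exists_first_of_exists_le hhit
    rw [stoppedInvA_of_first_mem a hN hmem hfirst, stoppedInvA_of_first_mem a hN (h N hN ▸ hmem)
      fun j hj => h j (by omega) ▸ hfirst j hj, h N hN]
  · push Not at hhit
    rw [stoppedInvA_of_forall_lt_not_mem a fun j hj => hhit j hj.le,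
      stoppedInvA_of_forall_lt_not_mem a fun j hj => h j hj.le ▸ hhit j hj.le, h n le_rfl]

variable {a}

lemma tsum_phat_mul_stoppedInvA (hapos : ∀ x : ℤ × ℤ, x ≠ 0 → 0 < a x)
    (hharm : ∀ x : ℤ × ℤ, x ≠ 0 →
      (1 / 4) * (a (x + (1, 0)) + a (x - (1, 0)) + a (x + (0, 1)) + a (x - (0, 1))) = a x)
    {n : ℕ} {σ : ℕ → ℤ × ℤ} (hσ : σ n ≠ 0) :
    ∑' y, phat a (σ n) y * stoppedInvA a (n + 1) (update σ (n + 1) y) = stoppedInvA a n σ := by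
  have hupd : ∀ y, ∀ i ≤ n, update σ (n + 1) y i = σ i :=
    fun y i hi => update_of_ne (by omega) _ _
  have hσa := (hapos _ hσ).ne'
  rw [tsum_phat_mul hσ]
  by_cases hhit : ∃ j ≤ n, σ j ∈ nbrs0
  · obtain ⟨N, hN, hmem, hfirst⟩ := exists_first_of_exists_le hhit
    have hstop : ∀ y, stoppedInvA a (n + 1) (update σ (n + 1) y) = (a (σ N))⁻¹ := fun y => by
      rw [stoppedInvA_of_first_mem a (by omega) (hupd y N hN ▸ hmem)
        fun j hj => hupd y j (hj.le.trans hN) ▸ hfirst j hj, hupd y N hN]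
    simp_rw [hstop, ← Finset.sum_mul, sum_nbrs0_add_eq hharm hσ,
      stoppedInvA_of_first_mem a hN hmem hfirst]
    field_simp
  · push Not at hhit
    have hnext : ∀ y, stoppedInvA a (n + 1) (update σ (n + 1) y) = (a y)⁻¹ := fun y => by
      rw [stoppedInvA_of_forall_lt_not_mem a fun j hj => hupd y j (by omega) ▸ hhit j (by omega),
        update_self]
    have hcancel : ∀ e ∈ nbrs0, a (σ n + e) * (a (σ n + e))⁻¹ = 1 := fun e he =>
      mul_inv_cancel₀ (hapos _ (add_ne_zero_of_not_mem_nbrs0 (hhit n le_rfl) he)).ne'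
    simp_rw [hnext, Finset.sum_congr rfl hcancel,
      stoppedInvA_of_forall_lt_not_mem a fun j hj => hhit j hj.le]
    field_simp
    norm_num [nbrs0]

end StoppedProcess

lemma coordFiltration_eq_piLE : coordFiltration = piLE := by
  refine Filtration.ext (funext fun n => ?_)
  rw [coordFiltration, Filtration.natural_eq_comap]
  rfl

/-- Under the law `P̂_x` of the conditioned walk `Ŝ` started at `x ≠ 0`,
the process `1 / a (Ŝ_{k ∧ τ̂₀(𝒩)})` stopped on entering the set `𝒩` of the four
neighbours of the origin is a martingale. -/
theorem stoppedInvA_martingale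
    (a : ℤ × ℤ → ℝ) (ha0 : a 0 = 0)
    (hapos : ∀ x : ℤ × ℤ, x ≠ 0 → 0 < a x)
    (hharm : ∀ x : ℤ × ℤ, x ≠ 0 →
      (1 / 4) * (a (x + (1, 0)) + a (x - (1, 0)) + a (x + (0, 1)) + a (x - (0, 1))) = a x)
    (x : ℤ × ℤ) (hx : x ≠ 0)
    (Phat : Measure (ℕ → ℤ × ℤ)) [IsProbabilityMeasure Phat]
    (hPhat : ∀ (n : ℕ) (ρ : ℕ → ℤ × ℤ),
      Phat {ω | ∀ i ≤ n, ω i = ρ i}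
        = ENNReal.ofReal ((if ρ 0 = x then 1 else 0)
            * ∏ i ∈ Finset.range n, phat a (ρ i) (ρ (i + 1)))) :
    Martingale (stoppedInvA a) coordFiltration Phat := by
  have hP : IsMarkovChainLaw Phat (phat a) x := hPhat
  have ha : ∀ y, 0 ≤ a y := fun y => by
    rcases eq_or_ne y 0 with rfl | hy
    exacts [ha0.ge, (hapos y hy).le]
  rw [coordFiltration_eq_piLE]
  refine hP.martingale (phat_nonneg ha) (stoppedInvA_dependsOn a)
    (fun n => hP.integrable_of_dependsOn (finite_support_phat a) (stoppedInvA_dependsOn a n))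
    fun n σ hσ => tsum_phat_mul_stoppedInvA hapos hharm ?_
  obtain ⟨hσ0, hsteps⟩ := pathWeight_ne_zero_iff.mp hσ
  cases n with
  | zero => exact hσ0 ▸ hx
  | succ m => exact ne_zero_of_phat_ne_zero ha0 (hsteps m (by omega))
end

section
/- Let x₁, x₂, x₃ ∈ ℤ² be distinct, set v₁ = x₂ − x₁, v₂ = x₃ − x₂, v₃ = x₁ − x₃, and write aᵢ = a(vᵢ) for the potential kernel a. Then the capacity of A = {x₁, x₂, x₃} equals a₁a₂a₃ / (a₁a₂ + a₁a₃ + a₂a₃ − (1/2)(a₁² + a₂² + a₃²)), provided the denominator is nonzero. Equivalently: the inverse capacity of A equals the sum of all entries of the inverse of the 3×3 matrix M with zero diagonal and off-diagonal entries M_{ij} = a(x_j − x_i). -/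
/-- Three-point capacity formula: with `v₁ = x₂ − x₁`, `v₂ = x₃ − x₂`,
`v₃ = x₁ − x₃` and `aᵢ = a(vᵢ)`, if the inverse capacity of `A = {x₁,x₂,x₃}` is the sum of
the entries of the inverse of the matrix `M i j = a (x_j − x_i)`, then
`cap A = a₁a₂a₃ / (a₁a₂ + a₁a₃ + a₂a₃ − (1/2)(a₁² + a₂² + a₃²))`; equivalently the sum of
the entries of `M⁻¹` is the reciprocal ratio. -/
theorem cap_three_point_set
    (a : ℤ × ℤ → ℝ) (hsymm : ∀ v : ℤ × ℤ, a (-v) = a v) (ha0 : a 0 = 0)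
    (hapos : ∀ v : ℤ × ℤ, v ≠ 0 → 0 < a v)
    (x₁ x₂ x₃ : ℤ × ℤ) (h12 : x₁ ≠ x₂) (h23 : x₂ ≠ x₃) (h13 : x₁ ≠ x₃)
    (M : Matrix (Fin 3) (Fin 3) ℝ)
    (hM : M = Matrix.of fun i j => a ((![x₁, x₂, x₃]) j - (![x₁, x₂, x₃]) i))
    (capA : ℝ)
    (hcap : capA⁻¹ = ∑ i : Fin 3, ∑ j : Fin 3, M⁻¹ i j)
    (hden : a (x₂ - x₁) * a (x₃ - x₂) + a (x₂ - x₁) * a (x₁ - x₃) + a (x₃ - x₂) * a (x₁ - x₃)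
        - (1 / 2) * (a (x₂ - x₁) ^ 2 + a (x₃ - x₂) ^ 2 + a (x₁ - x₃) ^ 2) ≠ 0) :
    capA = a (x₂ - x₁) * a (x₃ - x₂) * a (x₁ - x₃) /
        (a (x₂ - x₁) * a (x₃ - x₂) + a (x₂ - x₁) * a (x₁ - x₃) + a (x₃ - x₂) * a (x₁ - x₃)
          - (1 / 2) * (a (x₂ - x₁) ^ 2 + a (x₃ - x₂) ^ 2 + a (x₁ - x₃) ^ 2)) ∧
    ∑ i : Fin 3, ∑ j : Fin 3, M⁻¹ i j =
        (a (x₂ - x₁) * a (x₃ - x₂) + a (x₂ - x₁) * a (x₁ - x₃) + a (x₃ - x₂) * a (x₁ - x₃)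
          - (1 / 2) * (a (x₂ - x₁) ^ 2 + a (x₃ - x₂) ^ 2 + a (x₁ - x₃) ^ 2)) /
        (a (x₂ - x₁) * a (x₃ - x₂) * a (x₁ - x₃)) := by

  set a₁ := a (x₂ - x₁) with ha₁
  set a₂ := a (x₃ - x₂) with ha₂
  set a₃ := a (x₁ - x₃) with ha₃
  have h1 : (0:ℝ) < a₁ := hapos _ (sub_ne_zero.2 (Ne.symm h12))
  have h2 : (0:ℝ) < a₂ := hapos _ (sub_ne_zero.2 (Ne.symm h23))
  have h3 : (0:ℝ) < a₃ := hapos _ (sub_ne_zero.2 h13)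
  have e21 : a (x₁ - x₂) = a₁ := by rw [← neg_sub, hsymm]
  have e32 : a (x₂ - x₃) = a₂ := by rw [← neg_sub, hsymm]
  have e31 : a (x₃ - x₁) = a₃ := by rw [← neg_sub, hsymm]
  have h1' := h1.ne'
  have h2' := h2.ne'
  have h3' := h3.ne'
  set d : ℝ := 2 * (a₁ * a₂ * a₃) with hd
  have hd' : d ≠ 0 := by positivity
  set N : Matrix (Fin 3) (Fin 3) ℝ := Matrix.of
    ![![-a₂^2/d, a₂*a₃/d, a₁*a₂/d],
      ![a₂*a₃/d, -a₃^2/d, a₁*a₃/d],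
      ![a₁*a₂/d, a₁*a₃/d, -a₁^2/d]] with hN
  have hMN : M * N = 1 := by
    ext i j
    fin_cases i <;> fin_cases j <;>
      · simp [hM, hN, Matrix.mul_apply, Fin.sum_univ_three, sub_self, ha0, e21, e32, e31,
          Matrix.one_apply]
        field_simp
        ring
  have hMinv : M⁻¹ = N := Matrix.inv_eq_right_inv hMN
  have hsum : ∑ i : Fin 3, ∑ j : Fin 3, M⁻¹ i j =
      (a₁ * a₂ + a₁ * a₃ + a₂ * a₃ - (1 / 2) * (a₁ ^ 2 + a₂ ^ 2 + a₃ ^ 2)) /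
        (a₁ * a₂ * a₃) := by
    rw [hMinv]
    simp [hN, Fin.sum_univ_three]
    field_simp
    ring
  refine ⟨?_, hsum⟩
  have hc : capA⁻¹ = (a₁ * a₂ + a₁ * a₃ + a₂ * a₃ - (1 / 2) * (a₁ ^ 2 + a₂ ^ 2 + a₃ ^ 2)) /
      (a₁ * a₂ * a₃) := hcap.trans hsum
  have := congrArg (·⁻¹) hc
  simpa [inv_inv, inv_div] using this
end

section
/- Let the vacant set 𝒱^α of two-dimensional random interlacements satisfy P[A ⊆ 𝒱^α] = exp(−πα·cap(A ∪ {0})) for all finite A ⊆ ℤ². Then the conditional law of 𝒱^α given {x ∈ 𝒱^α} is invariant under any lattice isometry M of ℤ² that exchanges 0 and x: for every finite A ⊆ ℤ², P[A ⊆ 𝒱^α | x ∈ 𝒱^α] = P[MA ⊆ 𝒱^α | x ∈ 𝒱^α]. In particular, taking M to be the point reflection z ↦ x − z, P[A ⊆ 𝒱^α | x ∈ 𝒱^α] = P[(−A + x) ⊆ 𝒱^α | x ∈ 𝒱^α]. -/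
/-- Conditionally on `{x ∈ 𝒱^α}`, the law of the vacant set of
two-dimensional random interlacements is invariant under any lattice isometry `M`
exchanging `0` and `x`; in particular under the point reflection `z ↦ x − z`.
Here `P[A ⊆ 𝒱^α] = exp(−πα·cap(A ∪ {0}))` and capacity is invariant under lattice
isometries; conditional probabilities are the ratios
`P[A ⊆ 𝒱^α | x ∈ 𝒱^α] = P[A ∪ {x} ⊆ 𝒱^α] / P[{x} ⊆ 𝒱^α]`. -/
theorem vacant_conditional_isometry_invariance
    (α : ℝ) (cap : Finset (ℤ × ℤ) → ℝ)
    (hcapIso : ∀ T : (ℤ × ℤ) ≃ (ℤ × ℤ),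
      (∀ u v : ℤ × ℤ, ((T u).1 - (T v).1) ^ 2 + ((T u).2 - (T v).2) ^ 2
          = (u.1 - v.1) ^ 2 + (u.2 - v.2) ^ 2) →
      ∀ A : Finset (ℤ × ℤ), cap (A.image ⇑T) = cap A)
    (Pvac : Finset (ℤ × ℤ) → ℝ)  -- `Pvac A = P[A ⊆ 𝒱^α]`
    (hchar : ∀ A : Finset (ℤ × ℤ), Pvac A = Real.exp (-(Real.pi * α) * cap (insert 0 A)))
    (x : ℤ × ℤ) (hx : x ≠ 0)
    (M : (ℤ × ℤ) ≃ (ℤ × ℤ))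
    (hMiso : ∀ u v : ℤ × ℤ, ((M u).1 - (M v).1) ^ 2 + ((M u).2 - (M v).2) ^ 2
        = (u.1 - v.1) ^ 2 + (u.2 - v.2) ^ 2)
    (hM0 : M 0 = x) (hMx : M x = 0) :
    (∀ A : Finset (ℤ × ℤ),
      Pvac (insert x A) / Pvac {x} = Pvac (insert x (A.image ⇑M)) / Pvac {x}) ∧
    (∀ A : Finset (ℤ × ℤ),
      Pvac (insert x A) / Pvac {x}
        = Pvac (insert x (A.image fun z => x - z)) / Pvac {x}) := by
  have key : ∀ (T : (ℤ × ℤ) ≃ (ℤ × ℤ)),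
      (∀ u v : ℤ × ℤ, ((T u).1 - (T v).1) ^ 2 + ((T u).2 - (T v).2) ^ 2
          = (u.1 - v.1) ^ 2 + (u.2 - v.2) ^ 2) →
      T 0 = x → T x = 0 →
      ∀ A : Finset (ℤ × ℤ), Pvac (insert x A) = Pvac (insert x (A.image ⇑T)) := by
    intro T hT h0 hx' A
    rw [hchar, hchar]
    have himg : insert 0 (insert x (A.image ⇑T)) = (insert 0 (insert x A)).image ⇑T := by
      rw [Finset.image_insert, Finset.image_insert, h0, hx', Finset.insert_comm]
    rw [himg, hcapIso T hT]
  refine ⟨fun A => by rw [← key M hMiso hM0 hMx A], fun A => ?_⟩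
  have hinv : ∀ z : ℤ × ℤ, x - (x - z) = z := fun z => by ring
  exact congrArg (· / Pvac {x})
    (key ⟨fun z => x - z, fun z => x - z, hinv, hinv⟩
      (fun u v => by simp only [Equiv.coe_fn_mk, Prod.fst_sub, Prod.snd_sub]; ring) (by simp) (by simp) A)
end

section
/- Let x, y ∈ ℤ² with ‖x‖ = s → ∞, ln‖y‖ ∼ ln s, and ln‖x−y‖ ∼ β ln s for some β ∈ [0,1]. Then for the vacant set 𝒱^α of two-dimensional random interlacements, P[{x,y} ⊆ 𝒱^α] = s^{−4α/(4−β) + o(1)}. -/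
/-!
`Ψ` is homogeneous of degree one in `A = a x`, `B = a y`, `D = a (x - y)`, and for `D ≠ 0` it equals
`AB / (A + B - (D + (A - B)² / D) / 2)`. Since `a = (2/π) ln ‖·‖ + O(1)`, after division by
`ln s` the three values tend to `2/π`, `2/π`, `2β/π`. The correction `(A - B)² / (D ln s)` vanishes:
the triangle inequality for `‖·‖` gives `|A - B| ≤ D + O(1)`, and `D` is bounded below by a positive
constant because `a` is positive on `ℤ² ∖ {0}` and tends to infinity. Hence
`Ψ / ln s → (4/π²) / ((4 - β)/π)`, and `ln P = -παΨ`.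
-/

open Filter

/-- Euclidean norm of a lattice point. -/
noncomputable def enorm2 (x : ℤ × ℤ) : ℝ := Real.sqrt ((x.1 : ℝ) ^ 2 + (x.2 : ℝ) ^ 2)

open Topology

lemma enorm2_eq_norm (z : ℤ × ℤ) : enorm2 z = ‖(z.1 + z.2 * Complex.I : ℂ)‖ := by
  simp [enorm2, Complex.norm_def, Complex.normSq_apply, sq]

lemma abs_enorm2_sub_enorm2_le (u v : ℤ × ℤ) : |enorm2 u - enorm2 v| ≤ enorm2 (u - v) := by
  have hsub : ((u - v).1 + (u - v).2 * Complex.I : ℂ) =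
      (u.1 + u.2 * Complex.I) - (v.1 + v.2 * Complex.I) := by
    push_cast [Prod.fst_sub, Prod.snd_sub]
    ring
  rw [enorm2_eq_norm, enorm2_eq_norm, enorm2_eq_norm, hsub]
  exact abs_norm_sub_norm_le _ _

lemma norm_le_enorm2 (z : ℤ × ℤ) : ‖z‖ ≤ enorm2 z := by
  rw [Prod.norm_def, Int.norm_eq_abs, Int.norm_eq_abs, enorm2_eq_norm]
  refine max_le ?_ ?_
  · simpa using Complex.abs_re_le_norm (z.1 + z.2 * Complex.I)
  · simpa using Complex.abs_im_le_norm (z.1 + z.2 * Complex.I)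

lemma one_le_norm_of_ne_zero {z : ℤ × ℤ} (hz : z ≠ 0) : 1 ≤ ‖z‖ := by
  have h : z.1 ≠ 0 ∨ z.2 ≠ 0 := by
    contrapose! hz
    exact Prod.ext hz.1 hz.2
  rw [Prod.norm_def, Int.norm_eq_abs, Int.norm_eq_abs]
  rcases h with h | h
  · exact le_max_of_le_left (by exact_mod_cast Int.one_le_abs h)
  · exact le_max_of_le_right (by exact_mod_cast Int.one_le_abs h)

lemma one_le_enorm2 {z : ℤ × ℤ} (hz : z ≠ 0) : 1 ≤ enorm2 z :=
  (one_le_norm_of_ne_zero hz).trans (norm_le_enorm2 z)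

lemma tendsto_enorm2_cofinite : Tendsto enorm2 cofinite atTop :=
  tendsto_atTop_mono norm_le_enorm2 <|
    cocompact_eq_cofinite (ℤ × ℤ) ▸ tendsto_norm_cocompact_atTop

lemma log_le_log_two_add_log_add_log {p q r : ℝ} (hp : 0 < p) (hq : 1 ≤ q) (hr : 1 ≤ r)
    (h : p ≤ q + r) : Real.log p ≤ Real.log 2 + Real.log q + Real.log r := by
  have hqr : p ≤ 2 * q * r := by nlinarith
  calc Real.log p ≤ Real.log (2 * q * r) := Real.log_le_log hp hqr
    _ = Real.log 2 + Real.log q + Real.log r := by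
      rw [Real.log_mul (by positivity) (by positivity), Real.log_mul two_ne_zero (by positivity)]

lemma abs_log_enorm2_sub_le {x y : ℤ × ℤ} (hx : x ≠ 0) (hy : y ≠ 0) (hxy : x ≠ y) :
    |Real.log (enorm2 x) - Real.log (enorm2 y)| ≤ Real.log 2 + Real.log (enorm2 (x - y)) := by
  have hx1 := one_le_enorm2 hx
  have hy1 := one_le_enorm2 hy
  have hxy1 := one_le_enorm2 (sub_ne_zero.2 hxy)
  have htri := abs_le.1 (abs_enorm2_sub_enorm2_le x y)
  rw [abs_sub_le_iff]
  constructor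
  · linarith [log_le_log_two_add_log_add_log (by positivity) hy1 hxy1
      (by linarith : enorm2 x ≤ enorm2 y + enorm2 (x - y))]
  · linarith [log_le_log_two_add_log_add_log (by positivity) hx1 hxy1
      (by linarith : enorm2 y ≤ enorm2 x + enorm2 (x - y))]

lemma tendsto_div_of_abs_sub_le {ι : Type*} {l : Filter ι} {u v t : ι → ℝ} {C L : ℝ}
    (huv : ∀ᶠ n in l, |u n - v n| ≤ C) (ht : Tendsto t l atTop)
    (hv : Tendsto (fun n => v n / t n) l (𝓝 L)) : Tendsto (fun n => u n / t n) l (𝓝 L) := by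
  have hdiff : Tendsto (fun n => (u n - v n) / t n) l (𝓝 0) := by
    refine squeeze_zero_norm' ?_ ((tendsto_const_nhds (x := C)).div_atTop ht)
    filter_upwards [huv, ht.eventually_gt_atTop 0] with n hn htn
    rw [Real.norm_eq_abs, abs_div, abs_of_pos htn]
    exact div_le_div_of_nonneg_right hn htn.le
  simpa only [add_zero, ← add_div, add_sub_cancel] using hv.add hdiff

lemma sq_div_le_of_abs_le_add {u c D K : ℝ} (hc : 0 < c) (hcD : c ≤ D) (hK : 0 ≤ K)
    (hu : |u| ≤ D + K) : u ^ 2 / D ≤ (1 + K / c) * |u| := by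
  have hD : 0 < D := hc.trans_le hcD
  have hratio : |u| / D ≤ 1 + K / c :=
    calc |u| / D ≤ (D + K) / D := by gcongr
      _ = 1 + K / D := by field_simp
      _ ≤ 1 + K / c := by gcongr
  calc u ^ 2 / D = |u| * (|u| / D) := by rw [← sq_abs]; ring
    _ ≤ |u| * (1 + K / c) := by gcongr
    _ = (1 + K / c) * |u| := mul_comm _ _

lemma tendsto_sq_sub_div_zero {ι : Type*} {l : Filter ι} {A B D t : ι → ℝ} {c K : ℝ}
    (hc : 0 < c) (hK : 0 ≤ K) (hD : ∀ n, c ≤ D n) (hAB : ∀ n, |A n - B n| ≤ D n + K)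
    (ht : Tendsto t l atTop) (hlim : Tendsto (fun n => A n / t n - B n / t n) l (𝓝 0)) :
    Tendsto (fun n => (A n / t n - B n / t n) ^ 2 / (D n / t n)) l (𝓝 0) := by
  have hbound : Tendsto (fun n => (1 + K / c) * |A n / t n - B n / t n|) l (𝓝 0) := by
    simpa using (hlim.abs).const_mul (1 + K / c)
  refine squeeze_zero' ?_ ?_ hbound
  · filter_upwards [ht.eventually_gt_atTop 0] with n htn
    have := hc.trans_le (hD n)
    positivity
  · filter_upwards [ht.eventually_gt_atTop 0] with n htn
    -- the bound of `sq_div_le_of_abs_le_add` is invariant under rescaling `c, D, K` by `t n`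
    have h := sq_div_le_of_abs_le_add (div_pos hc htn) (div_le_div_of_nonneg_right (hD n) htn.le)
      (div_nonneg hK htn.le) (u := A n / t n - B n / t n) (by
        rw [← sub_div, ← add_div, abs_div, abs_of_pos htn]
        exact div_le_div_of_nonneg_right (hAB n) htn.le)
    rwa [div_div_div_cancel_right₀ htn.ne'] at h

section LogAsymptotics

variable {a : ℤ × ℤ → ℝ} {C : ℝ}

lemma exists_pos_le_of_log_asymp (hapos : ∀ z : ℤ × ℤ, z ≠ 0 → 0 < a z)
    (haAsymp : ∀ z : ℤ × ℤ, z ≠ 0 → |a z - (2 / Real.pi) * Real.log (enorm2 z)| ≤ C) :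
    ∃ c, 0 < c ∧ ∀ z : ℤ × ℤ, z ≠ 0 → c ≤ a z := by
  have hlog : Tendsto (fun z : {z : ℤ × ℤ // z ≠ 0} => 2 / Real.pi * Real.log (enorm2 z) - C)
      cofinite atTop :=
    tendsto_atTop_add_const_right _ _ <| Tendsto.const_mul_atTop (by positivity) <|
      (Real.tendsto_log_atTop.comp tendsto_enorm2_cofinite).comp
        Subtype.val_injective.tendsto_cofinite
  have ha : Tendsto (fun z : {z : ℤ × ℤ // z ≠ 0} => a z) cofinite atTop :=
    tendsto_atTop_mono (fun z => by linarith [(abs_le.1 (haAsymp z z.2)).1]) hlog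
  have : Nonempty {z : ℤ × ℤ // z ≠ 0} := ⟨⟨(1, 0), by simp⟩⟩
  obtain ⟨z₀, hz₀⟩ := ha.exists_forall_le
  exact ⟨a z₀, hapos z₀ z₀.2, fun z hz => hz₀ ⟨z, hz⟩⟩

lemma abs_sub_le_of_log_asymp
    (haAsymp : ∀ z : ℤ × ℤ, z ≠ 0 → |a z - (2 / Real.pi) * Real.log (enorm2 z)| ≤ C)
    {x y : ℤ × ℤ} (hx : x ≠ 0) (hy : y ≠ 0) (hxy : x ≠ y) :
    |a x - a y| ≤ a (x - y) + (3 * C + 2 / Real.pi * Real.log 2) := by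
  have hκ : (0 : ℝ) < 2 / Real.pi := by positivity
  have hlog : |2 / Real.pi * Real.log (enorm2 x) - 2 / Real.pi * Real.log (enorm2 y)| ≤
      2 / Real.pi * Real.log 2 + 2 / Real.pi * Real.log (enorm2 (x - y)) := by
    rw [← mul_sub, abs_mul, abs_of_pos hκ, ← mul_add]
    exact mul_le_mul_of_nonneg_left (abs_log_enorm2_sub_le hx hy hxy) hκ.le
  have h₁ := abs_le.1 (haAsymp x hx)
  have h₂ := abs_le.1 (haAsymp y hy)
  have h₃ := abs_le.1 (haAsymp (x - y) (sub_ne_zero.2 hxy))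
  rw [abs_le] at hlog ⊢
  constructor <;> linarith

lemma tendsto_div_of_log_asymp
    (haAsymp : ∀ z : ℤ × ℤ, z ≠ 0 → |a z - (2 / Real.pi) * Real.log (enorm2 z)| ≤ C)
    {ι : Type*} {l : Filter ι} {g : ι → ℤ × ℤ} (hg : ∀ n, g n ≠ 0) {t : ι → ℝ}
    (ht : Tendsto t l atTop) {L : ℝ}
    (hL : Tendsto (fun n => Real.log (enorm2 (g n)) / t n) l (𝓝 L)) :
    Tendsto (fun n => a (g n) / t n) l (𝓝 (2 / Real.pi * L)) :=
  tendsto_div_of_abs_sub_le (.of_forall fun n => haAsymp _ (hg n)) ht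
    (by simpa only [mul_div_assoc] using hL.const_mul (2 / Real.pi))

end LogAsymptotics

/-- `twoPointCapacity (a x) (a y) (a (x - y))` is the capacity `Ψ` of the set `{x, y}`. -/
noncomputable def twoPointCapacity (A B D : ℝ) : ℝ :=
  A * B * D / (A * B + A * D + B * D - (1 / 2) * (A ^ 2 + B ^ 2 + D ^ 2))

lemma twoPointCapacity_div (A B D t : ℝ) :
    twoPointCapacity (A / t) (B / t) (D / t) = twoPointCapacity A B D / t := by
  rcases eq_or_ne t 0 with rfl | ht
  · simp [twoPointCapacity]
  unfold twoPointCapacity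
  field_simp

lemma twoPointCapacity_eq {A B D : ℝ} (hD : D ≠ 0) :
    twoPointCapacity A B D = A * B / (A + B - (D + (A - B) ^ 2 / D) / 2) := by
  have hden : A + B - (D + (A - B) ^ 2 / D) / 2 =
      (A * B + A * D + B * D - (1 / 2) * (A ^ 2 + B ^ 2 + D ^ 2)) / D := by
    field_simp
    ring
  rw [twoPointCapacity, hden, div_div_eq_mul_div]

lemma tendsto_twoPointCapacity {ι : Type*} {l : Filter ι} {p q r : ι → ℝ} {P Q R : ℝ}
    (hp : Tendsto p l (𝓝 P)) (hq : Tendsto q l (𝓝 Q)) (hr : Tendsto r l (𝓝 R))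
    (hr0 : ∀ᶠ n in l, r n ≠ 0) (herr : Tendsto (fun n => (p n - q n) ^ 2 / r n) l (𝓝 0))
    (hPQR : P + Q - R / 2 ≠ 0) :
    Tendsto (fun n => twoPointCapacity (p n) (q n) (r n)) l (𝓝 (P * Q / (P + Q - R / 2))) := by
  have hden := (hp.add hq).sub ((hr.add herr).div_const 2)
  rw [add_zero] at hden
  refine ((hp.mul hq).div hden hPQR).congr' ?_
  filter_upwards [hr0] with n hn
  exact (twoPointCapacity_eq hn).symm

theorem vacant_two_point_asymptotics_general
    (a : ℤ × ℤ → ℝ) (C : ℝ)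
    (hapos : ∀ z : ℤ × ℤ, z ≠ 0 → 0 < a z)
    (haAsymp : ∀ z : ℤ × ℤ, z ≠ 0 →
      |a z - (2 / Real.pi) * Real.log (enorm2 z)| ≤ C)
    (α β : ℝ) (hβ1 : β ≤ 1)
    (x y : ℕ → ℤ × ℤ)
    (hx0 : ∀ n, x n ≠ 0) (hy0 : ∀ n, y n ≠ 0) (hxy : ∀ n, x n ≠ y n)
    (s : ℕ → ℝ) (hs : ∀ n, s n = enorm2 (x n))
    (hsTop : Tendsto s atTop atTop)
    (hy : Tendsto (fun n => Real.log (enorm2 (y n)) / Real.log (s n)) atTop (nhds 1))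
    (hxysub : Tendsto (fun n => Real.log (enorm2 (x n - y n)) / Real.log (s n))
      atTop (nhds β))
    (Pvac : ℕ → ℝ)  -- `Pvac n = P[{x n, y n} ⊆ 𝒱^α]`
    (hchar : ∀ n, Pvac n = Real.exp (-(Real.pi * α) *
      (a (x n) * a (y n) * a (x n - y n) /
        (a (x n) * a (y n) + a (x n) * a (x n - y n) + a (y n) * a (x n - y n)
          - (1 / 2) * (a (x n) ^ 2 + a (y n) ^ 2 + a (x n - y n) ^ 2))))) :
    Tendsto (fun n => Real.log (Pvac n) / Real.log (s n)) atTop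
      (nhds (-(4 * α) / (4 - β))) := by
  obtain ⟨c, hc, hca⟩ := exists_pos_le_of_log_asymp hapos haAsymp
  have hC : 0 ≤ C := (abs_nonneg _).trans (haAsymp (1, 0) (by simp))
  set t : ℕ → ℝ := fun n => Real.log (s n)
  have ht : Tendsto t atTop atTop := Real.tendsto_log_atTop.comp hsTop
  have ht0 : ∀ᶠ n in atTop, 0 < t n := ht.eventually_gt_atTop 0
  have hxy0 : ∀ n, x n - y n ≠ 0 := fun n => sub_ne_zero.2 (hxy n)
  have hAx := tendsto_div_of_log_asymp haAsymp hx0 ht (L := 1) <| tendsto_const_nhds.congr' <| by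
    filter_upwards [ht0] with n hn
    rw [← hs n]
    exact (div_self hn.ne').symm
  have hAy := tendsto_div_of_log_asymp haAsymp hy0 ht hy
  have hAxy := tendsto_div_of_log_asymp haAsymp hxy0 ht hxysub
  have herr := tendsto_sq_sub_div_zero hc (by positivity) (fun n => hca _ (hxy0 n))
    (fun n => abs_sub_le_of_log_asymp haAsymp (hx0 n) (hy0 n) (hxy n)) ht
    (by simpa using hAx.sub hAy)
  have h4β : (4 : ℝ) - β ≠ 0 := by linarith
  have hden : 2 / Real.pi * 1 + 2 / Real.pi * 1 - 2 / Real.pi * β / 2 = (4 - β) / Real.pi := by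
    ring
  have hcap := tendsto_twoPointCapacity hAx hAy hAxy
    (by filter_upwards [ht0] with n hn using (div_pos (hapos _ (hxy0 n)) hn).ne') herr
    (hden ▸ div_ne_zero h4β Real.pi_ne_zero)
  refine ((hcap.const_mul (-(Real.pi * α))).congr' ?_).trans_eq ?_
  · filter_upwards with n
    rw [twoPointCapacity_div, hchar n, Real.log_exp, mul_div_assoc]
    rfl
  · rw [hden]
    field_simp
    norm_num

/-- If `‖x n‖ = s n → ∞`, `ln‖y n‖ ∼ ln (s n)` and
`ln‖x n − y n‖ ∼ β ln (s n)` with `β ∈ [0,1]`, then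
`P[{x n, y n} ⊆ 𝒱^α] = (s n)^{−4α/(4−β) + o(1)}`, i.e. the logarithm of this probability
divided by `ln (s n)` tends to `−4α/(4−β)`.  Here
`P[{x,y} ⊆ 𝒱^α] = exp(−πα Ψ(x,y))` with the two-point formula for `Ψ`, and
`a z = (2/π) ln‖z‖ + O(1)`. -/
theorem vacant_two_point_asymptotics
    (a : ℤ × ℤ → ℝ) (C : ℝ)
    (hapos : ∀ z : ℤ × ℤ, z ≠ 0 → 0 < a z)
    (haAsymp : ∀ z : ℤ × ℤ, z ≠ 0 →
      |a z - (2 / Real.pi) * Real.log (enorm2 z)| ≤ C)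
    (α β : ℝ) (hα : 0 < α) (hβ0 : 0 ≤ β) (hβ1 : β ≤ 1)
    (x y : ℕ → ℤ × ℤ)
    (hx0 : ∀ n, x n ≠ 0) (hy0 : ∀ n, y n ≠ 0) (hxy : ∀ n, x n ≠ y n)
    (s : ℕ → ℝ) (hs : ∀ n, s n = enorm2 (x n))
    (hsTop : Tendsto s atTop atTop)
    (hy : Tendsto (fun n => Real.log (enorm2 (y n)) / Real.log (s n)) atTop (nhds 1))
    (hxysub : Tendsto (fun n => Real.log (enorm2 (x n - y n)) / Real.log (s n))
      atTop (nhds β))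
    (Pvac : ℕ → ℝ)  -- `Pvac n = P[{x n, y n} ⊆ 𝒱^α]`
    (hchar : ∀ n, Pvac n = Real.exp (-(Real.pi * α) *
      (a (x n) * a (y n) * a (x n - y n) /
        (a (x n) * a (y n) + a (x n) * a (x n - y n) + a (y n) * a (x n - y n)
          - (1 / 2) * (a (x n) ^ 2 + a (y n) ^ 2 + a (x n - y n) ^ 2))))) :
    Tendsto (fun n => Real.log (Pvac n) / Real.log (s n)) atTop
      (nhds (-(4 * α) / (4 - β))) :=
  vacant_two_point_asymptotics_general a C hapos haAsymp α β hβ1 x y hx0 hy0 hxy s hs hsTop hy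
    hxysub Pvac hchar
end
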